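/- Let x₁,…,x_N and p₁,…,p_N be points of ℝⁿ, and set μ₀ := (1/N)Σ_{i=1}^N δ_{x_i} and μ₁ := (1/N)Σ_{i=1}^N δ_{p_i}. Then the tropical energy satisfies E_trop^{(N)}(x₁,…,x_N) := (1/N)·max_{σ∈S_N} Σ_{i=1}^N ⟨x_i, p_{σ(i)}⟩ = −C(μ₀,μ₁), i.e. it equals minus the optimal transport cost between the two empirical measures for the cost function c(x,y) = −⟨x,y⟩. -/

import Mathlib

open MeasureTheory Filter Topology
open scoped ENNReal NNReal RealInnerProductSpace

/-- The empirical measure `(1/N) ∑ δ_{x i}` of a configuration in `ℝⁿ`. -/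
noncomputable def empiricalE {n : ℕ} (N : ℕ) (x : Fin N → EuclideanSpace ℝ (Fin n)) :
    Measure (EuclideanSpace ℝ (Fin n)) :=
  (N : ℝ≥0∞)⁻¹ • ∑ i : Fin N, Measure.dirac (x i)

/-- The optimal transport cost between `μ₀` and `μ₁` for the cost `c(x,y) = -⟨x,y⟩`. -/
noncomputable def otCost {n : ℕ} (μ₀ μ₁ : Measure (EuclideanSpace ℝ (Fin n))) : ℝ :=
  sInf {c : ℝ | ∃ γ : Measure (EuclideanSpace ℝ (Fin n) × EuclideanSpace ℝ (Fin n)),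
    IsProbabilityMeasure γ ∧ γ.map Prod.fst = μ₀ ∧ γ.map Prod.snd = μ₁ ∧
    c = ∫ q, -⟪q.1, q.2⟫ ∂γ}

/-! A coupling `γ` of two uniform empirical measures on `N` atoms lifts to a doubly stochastic
`N × N` matrix: spread the mass `γ {(a, b)}` evenly over the indices `i` with `x i = a` and `j`
with `p j = b`. Integrals against `γ` become `(1/N) ∑ D i j c (x i, p j)`, a linear function of
`D`, which by Birkhoff's theorem is maximised at a permutation matrix. Conversely every
permutation `σ` is realised by the coupling `(1/N) ∑ δ (x i, p (σ i))`. -/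

open Finset

section Birkhoff

variable {ι : Type*} [Fintype ι] [DecidableEq ι]

lemma Equiv.Perm.sum_permMatrix_mul (σ : Equiv.Perm ι) (c : ι → ι → ℝ) :
    ∑ i, ∑ j, σ.permMatrix ℝ i j * c i j = ∑ i, c i (σ i) := by
  simp [Equiv.Perm.permMatrix, PEquiv.toMatrix_apply, Equiv.toPEquiv_apply]

lemma exists_perm_sum_mul_le_of_mem_doublyStochastic {D : Matrix ι ι ℝ}
    (hD : D ∈ doublyStochastic ℝ ι) (c : ι → ι → ℝ) :
    ∃ σ : Equiv.Perm ι, ∑ i, ∑ j, D i j * c i j ≤ ∑ i, c i (σ i) := by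
  let L : Matrix ι ι ℝ →ₗ[ℝ] ℝ := ∑ i, ∑ j, c i j • Matrix.entryLinearMap ℝ ℝ i j
  rw [← SetLike.mem_coe, doublyStochastic_eq_convexHull_permMatrix] at hD
  obtain ⟨_, ⟨σ, rfl⟩, hσ⟩ :=
    (L.convexOn convex_univ).exists_ge_of_mem_convexHull (Set.subset_univ _) hD
  refine ⟨σ, ?_⟩
  simpa [L, ← σ.sum_permMatrix_mul c, mul_comm] using hσ

end Birkhoff

lemma card_fiber_ne_zero {ι α : Type*} [Fintype ι] [DecidableEq α] (g : ι → α) (i : ι) :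
    (#{j | g j = g i} : ℝ) ≠ 0 :=
  Nat.cast_ne_zero.mpr (card_ne_zero_of_mem (by simp : i ∈ _))

lemma sum_div_card_fiber {ι α : Type*} [Fintype ι] [DecidableEq α] (g : ι → α) (h : α → ℝ) :
    ∑ i, h (g i) / #{j | g j = g i} = ∑ a ∈ univ.image g, h a := by
  rw [sum_comp (fun a => h a / #{j | g j = a}) g]
  refine sum_congr rfl fun a ha => ?_
  obtain ⟨i, -, rfl⟩ := mem_image.mp ha
  have := card_fiber_ne_zero g i
  rw [nsmul_eq_mul]
  field_simp

section FiberLift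

variable {α β : Type*} [DecidableEq α] [DecidableEq β] {N : ℕ}

noncomputable def fiberLift (x : Fin N → α) (p : Fin N → β) (m : α → β → ℝ) :
    Matrix (Fin N) (Fin N) ℝ :=
  .of fun i j => N * m (x i) (p j) / (#{k | x k = x i} * #{l | p l = p j})

lemma fiberLift_mem_doublyStochastic {x : Fin N → α} {p : Fin N → β} {m : α → β → ℝ}
    (hm : ∀ a b, 0 ≤ m a b)
    (hrow : ∀ a, ∑ b ∈ univ.image p, m a b = #{i | x i = a} / N)
    (hcol : ∀ b, ∑ a ∈ univ.image x, m a b = #{j | p j = b} / N) :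
    fiberLift x p m ∈ doublyStochastic ℝ (Fin N) := by
  have hN (i : Fin N) : (N : ℝ) ≠ 0 := Nat.cast_ne_zero.mpr (Fin.pos i).ne'
  simp only [mem_doublyStochastic_iff_sum, fiberLift, Matrix.of_apply]
  refine ⟨fun i j => div_nonneg (mul_nonneg N.cast_nonneg (hm _ _)) (by positivity),
    fun i => ?_, fun j => ?_⟩
  · have := card_fiber_ne_zero x i
    calc _ = N / #{k | x k = x i} * ∑ j, m (x i) (p j) / #{l | p l = p j} := by
          rw [mul_sum]; congr! 1 with j; field_simp
      _ = 1 := by rw [sum_div_card_fiber p, hrow]; field_simp [hN i]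
  · have := card_fiber_ne_zero p j
    calc _ = N / #{l | p l = p j} * ∑ i, m (x i) (p j) / #{k | x k = x i} := by
          rw [mul_sum]; congr! 1 with i; field_simp
      _ = 1 := by rw [sum_div_card_fiber x (m · (p j)), hcol]; field_simp [hN j]

lemma inv_mul_sum_fiberLift_mul (x : Fin N → α) (p : Fin N → β) (m c : α → β → ℝ) :
    (N : ℝ)⁻¹ * ∑ i, ∑ j, fiberLift x p m i j * c (x i) (p j)
      = ∑ a ∈ univ.image x, ∑ b ∈ univ.image p, m a b * c a b := by
  calc _ = ∑ i, (∑ j, m (x i) (p j) * c (x i) (p j) / #{l | p l = p j}) / #{k | x k = x i} := by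
        simp only [fiberLift, Matrix.of_apply, mul_sum, sum_div]
        congr! 2 with i - j
        have := (Fin.pos i).ne'
        field_simp
    _ = ∑ i, (∑ b ∈ univ.image p, m (x i) b * c (x i) b) / #{k | x k = x i} :=
        sum_congr rfl fun i _ => by rw [sum_div_card_fiber p (fun b => m (x i) b * c (x i) b)]
    _ = _ := sum_div_card_fiber x (fun a => ∑ b ∈ univ.image p, m a b * c a b)

end FiberLift

section Coupling

variable {α β : Type*} [MeasurableSpace α] [MeasurableSpace β]

lemma map_smul_sum_dirac {ι : Type*} [Fintype ι] {f : α → β} (hf : Measurable f) (c : ℝ≥0∞)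
    (z : ι → α) :
    (c • ∑ i, Measure.dirac (z i)).map f = c • ∑ i, Measure.dirac (f (z i)) := by
  rw [← Measure.mapₗ_apply_of_measurable hf, LinearMap.map_smul, map_sum]
  simp_rw [Measure.mapₗ_apply_of_measurable hf, Measure.map_dirac' hf]

variable [MeasurableSingletonClass α] [MeasurableSingletonClass β]

lemma integral_eq_sum_of_measure_compl_eq_zero {G : Type*} [NormedAddCommGroup G]
    [NormedSpace ℝ G] [CompleteSpace G] {μ : Measure α} [IsFiniteMeasure μ] {s : Finset α}
    (hs : μ (↑s)ᶜ = 0) (f : α → G) :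
    ∫ a, f a ∂μ = ∑ a ∈ s, μ.real {a} • f a := by
  have hμ : μ.restrict ↑s = μ := Measure.restrict_eq_self_of_ae_mem (mem_ae_iff.mpr hs)
  rw [← setIntegral_finset s IntegrableOn.finset, hμ]

lemma sum_measureReal_prod_eq_map_fst {γ : Measure (α × β)} [IsFiniteMeasure γ] {t : Finset β}
    (ht : γ (Prod.snd ⁻¹' (↑t)ᶜ) = 0) (a : α) :
    ∑ b ∈ t, γ.real {(a, b)} = (γ.map Prod.fst).real {a} := by
  have hfiber : Prod.fst ⁻¹' {a} ∩ Prod.snd ⁻¹' ↑t = (↑({a} ×ˢ t) : Set (α × β)) := by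
    ext ⟨a', b⟩; simp [eq_comm, and_comm]
  rw [map_measureReal_apply measurable_fst (measurableSet_singleton a), measureReal_def,
    ← measure_inter_conull (t := Prod.snd ⁻¹' ↑t) ht, hfiber, ← measureReal_def,
    ← sum_measureReal_singleton, sum_product, sum_singleton]

lemma sum_measureReal_prod_eq_map_snd {γ : Measure (α × β)} [IsFiniteMeasure γ] {s : Finset α}
    (hs : γ (Prod.fst ⁻¹' (↑s)ᶜ) = 0) (b : β) :
    ∑ a ∈ s, γ.real {(a, b)} = (γ.map Prod.snd).real {b} := by
  have hfiber : Prod.snd ⁻¹' {b} ∩ Prod.fst ⁻¹' ↑s = (↑(s ×ˢ {b}) : Set (α × β)) := by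
    ext ⟨a, b'⟩; simp [eq_comm, and_comm]
  rw [map_measureReal_apply measurable_snd (measurableSet_singleton b), measureReal_def,
    ← measure_inter_conull (t := Prod.fst ⁻¹' ↑s) hs, hfiber, ← measureReal_def,
    ← sum_measureReal_singleton, sum_product, sum_congr rfl fun _ _ => sum_singleton _ _]

variable {N : ℕ}

lemma smul_sum_dirac_compl_image [DecidableEq α] (x : Fin N → α) :
    ((N : ℝ≥0∞)⁻¹ • ∑ i, Measure.dirac (x i)) (↑(univ.image x))ᶜ = 0 := by
  simp [Measure.dirac_apply]

lemma smul_sum_dirac_real_singleton [DecidableEq α] (x : Fin N → α) (a : α) :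
    ((N : ℝ≥0∞)⁻¹ • ∑ i, Measure.dirac (x i)).real {a} = #{i | x i = a} / N := by
  simp [measureReal_def, Set.indicator_apply, div_eq_inv_mul]

theorem exists_mem_doublyStochastic_integral_eq {x : Fin N → α} {p : Fin N → β}
    {γ : Measure (α × β)} [IsFiniteMeasure γ]
    (hx : γ.map Prod.fst = (N : ℝ≥0∞)⁻¹ • ∑ i, Measure.dirac (x i))
    (hp : γ.map Prod.snd = (N : ℝ≥0∞)⁻¹ • ∑ j, Measure.dirac (p j)) :
    ∃ D ∈ doublyStochastic ℝ (Fin N), ∀ c : α × β → ℝ,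
      ∫ q, c q ∂γ = (N : ℝ)⁻¹ * ∑ i, ∑ j, D i j * c (x i, p j) := by
  classical
  set m : α → β → ℝ := fun a b => γ.real {(a, b)}
  have hx₀ : γ (Prod.fst ⁻¹' (↑(univ.image x))ᶜ) = 0 := by
    rw [← Measure.map_apply measurable_fst (Finset.measurableSet _).compl, hx]
    exact smul_sum_dirac_compl_image x
  have hp₀ : γ (Prod.snd ⁻¹' (↑(univ.image p))ᶜ) = 0 := by
    rw [← Measure.map_apply measurable_snd (Finset.measurableSet _).compl, hp]
    exact smul_sum_dirac_compl_image p
  have hrow (a : α) : ∑ b ∈ univ.image p, m a b = #{i | x i = a} / N := by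
    rw [sum_measureReal_prod_eq_map_fst hp₀, hx, smul_sum_dirac_real_singleton]
  have hcol (b : β) : ∑ a ∈ univ.image x, m a b = #{j | p j = b} / N := by
    rw [sum_measureReal_prod_eq_map_snd hx₀, hp, smul_sum_dirac_real_singleton]
  refine ⟨fiberLift x p m, fiberLift_mem_doublyStochastic (fun _ _ => measureReal_nonneg)
    hrow hcol, fun c => ?_⟩
  have hS : γ (↑(univ.image x ×ˢ univ.image p))ᶜ = 0 := by
    rw [coe_product, Set.compl_prod_eq_union, Set.prod_univ, Set.univ_prod]
    exact measure_union_null hx₀ hp₀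
  rw [integral_eq_sum_of_measure_compl_eq_zero hS, sum_product,
    inv_mul_sum_fiberLift_mul x p m fun a b => c (a, b)]
  rfl

lemma exists_coupling_integral_eq_of_perm (hN : 0 < N) (x : Fin N → α) (p : Fin N → β)
    (σ : Equiv.Perm (Fin N)) :
    ∃ γ : Measure (α × β), IsProbabilityMeasure γ ∧
      γ.map Prod.fst = (N : ℝ≥0∞)⁻¹ • ∑ i, Measure.dirac (x i) ∧
      γ.map Prod.snd = (N : ℝ≥0∞)⁻¹ • ∑ j, Measure.dirac (p j) ∧
      ∀ c : α × β → ℝ, ∫ q, c q ∂γ = (N : ℝ)⁻¹ * ∑ i, c (x i, p (σ i)) := by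
  refine ⟨(N : ℝ≥0∞)⁻¹ • ∑ i, Measure.dirac (x i, p (σ i)), ⟨?_⟩, ?_, ?_, fun c => ?_⟩
  · simp [ENNReal.inv_mul_cancel (Nat.cast_ne_zero.mpr hN.ne')]
  · exact map_smul_sum_dirac measurable_fst _ _
  · rw [map_smul_sum_dirac measurable_snd]
    exact congrArg _ (Equiv.sum_comp σ fun j => Measure.dirac (p j))
  · rw [integral_smul_measure, integral_finsetSum_measure fun i _ => integrable_dirac enorm_lt_top]
    simp

end Coupling

/-- The tropical energy `E_trop^{(N)}(x) = (1/N) max_σ ∑ ⟨x_i, p_{σ(i)}⟩`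
equals minus the optimal transport cost (for the cost `c(x,y) = -⟨x,y⟩`) between the
empirical measures of `(x_i)` and of `(p_i)`. -/
theorem tropical_energy_eq_neg_transport_cost
    {n N : ℕ} (hN : 0 < N) (x p : Fin N → EuclideanSpace ℝ (Fin n)) :
    (1 / (N : ℝ)) *
        (Finset.univ : Finset (Equiv.Perm (Fin N))).sup' Finset.univ_nonempty
          (fun σ => ∑ i, ⟪x i, p (σ i)⟫)
      = - otCost (empiricalE N x) (empiricalE N p) := by
  obtain ⟨σ, -, hσ⟩ := exists_mem_eq_sup' univ_nonempty fun σ : Equiv.Perm (Fin N) =>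
    ∑ i, ⟪x i, p (σ i)⟫
  have hmax (τ : Equiv.Perm (Fin N)) : ∑ i, ⟪x i, p (τ i)⟫ ≤ ∑ i, ⟪x i, p (σ i)⟫ :=
    hσ ▸ le_sup' (fun σ => ∑ i, ⟪x i, p (σ i)⟫) (mem_univ τ)
  rw [hσ, otCost, IsLeast.csInf_eq (a := -((N : ℝ)⁻¹ * ∑ i, ⟪x i, p (σ i)⟫)) ⟨?_, ?_⟩, neg_neg,
    one_div]
  · obtain ⟨γ, hγ, hx, hp, hint⟩ := exists_coupling_integral_eq_of_perm hN x p σ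
    exact ⟨γ, hγ, hx, hp, by simp [hint, sum_neg_distrib]⟩
  · rintro _ ⟨γ, hγ, hx, hp, rfl⟩
    obtain ⟨D, hD, hint⟩ := exists_mem_doublyStochastic_integral_eq hx hp
    obtain ⟨τ, hτ⟩ := exists_perm_sum_mul_le_of_mem_doublyStochastic hD fun i j => ⟪x i, p j⟫
    rw [hint]
    simp only [mul_neg, sum_neg_distrib, neg_le_neg_iff]
    exact mul_le_mul_of_nonneg_left (hτ.trans (hmax τ)) (by positivity)
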